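/- arXiv:1312.6816 — 3 statements merged into one kernel-verified Lean document; each statement's English description precedes it below -/
import Mathlib

section
/- The creation and annihilation operators form commutative families: for all λ, μ ∈ ℂ, B(λ) B(μ) = B(μ) B(λ) and C(λ) C(μ) = C(μ) C(λ) as operators on (ℂ²)^{⊗L}. -/
noncomputable section

/-- `a(λ) = sinh(λ + γ)` -/
def af (γ lam : ℂ) : ℂ := Complex.sinh (lam + γ)

/-- `b(λ) = sinh(λ)` -/
def bf (lam : ℂ) : ℂ := Complex.sinh lam

/-- `c(λ) = sinh(γ)` (a constant function of `λ`). -/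
def cf (γ : ℂ) (_lam : ℂ) : ℂ := Complex.sinh γ

/-- The six-vertex R-matrix on `ℂ² ⊗ ℂ²`, in the ordered basis
`(e₁⊗e₁, e₁⊗e₂, e₂⊗e₁, e₂⊗e₂)` encoded by pairs `(i, j) : Fin 2 × Fin 2`. -/
def Rmat (γ lam : ℂ) : Matrix (Fin 2 × Fin 2) (Fin 2 × Fin 2) ℂ :=
  fun p q =>
    if p = q then (if p.1 = p.2 then af γ lam else bf lam)
    else if p.1 = q.2 ∧ p.2 = q.1 then cf γ lam else 0

/-- `R_{ai}(λ)` on `ℂ² ⊗ (ℂ²)^{⊗L}`: `R(λ)` on the auxiliary factor and the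
`i`-th quantum factor, identity elsewhere.  A vector of the space is indexed by
a pair `(auxiliary index, quantum indices)`. -/
def Rai (γ : ℂ) {L : ℕ} (lam : ℂ) (i : Fin L) :
    Matrix (Fin 2 × (Fin L → Fin 2)) (Fin 2 × (Fin L → Fin 2)) ℂ :=
  fun p q =>
    Rmat γ lam (p.1, p.2 i) (q.1, q.2 i) *
      (if ∀ k, k ≠ i → p.2 k = q.2 k then 1 else 0)

/-- The monodromy matrix `T(λ) = R_{a1}(λ−μ₁) R_{a2}(λ−μ₂) ⋯ R_{aL}(λ−μ_L)`. -/
def Tmat (γ : ℂ) {L : ℕ} (μ : Fin L → ℂ) (lam : ℂ) :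
    Matrix (Fin 2 × (Fin L → Fin 2)) (Fin 2 × (Fin L → Fin 2)) ℂ :=
  (List.ofFn fun i : Fin L => Rai γ (lam - μ i) i).prod

/-- `A(λ)`: the (1,1) block of `T(λ)` with respect to the auxiliary factor. -/
def Aop (γ : ℂ) {L : ℕ} (μ : Fin L → ℂ) (lam : ℂ) :
    Matrix (Fin L → Fin 2) (Fin L → Fin 2) ℂ :=
  fun p q => Tmat γ μ lam (0, p) (0, q)

/-- `B(λ)`: the (1,2) block of `T(λ)` with respect to the auxiliary factor. -/
def Bop (γ : ℂ) {L : ℕ} (μ : Fin L → ℂ) (lam : ℂ) :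
    Matrix (Fin L → Fin 2) (Fin L → Fin 2) ℂ :=
  fun p q => Tmat γ μ lam (0, p) (1, q)

/-- `C(λ)`: the (2,1) block of `T(λ)` with respect to the auxiliary factor. -/
def Cop (γ : ℂ) {L : ℕ} (μ : Fin L → ℂ) (lam : ℂ) :
    Matrix (Fin L → Fin 2) (Fin L → Fin 2) ℂ :=
  fun p q => Tmat γ μ lam (1, p) (0, q)

/-- `D(λ)`: the (2,2) block of `T(λ)` with respect to the auxiliary factor. -/
def Dop (γ : ℂ) {L : ℕ} (μ : Fin L → ℂ) (lam : ℂ) :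
    Matrix (Fin L → Fin 2) (Fin L → Fin 2) ℂ :=
  fun p q => Tmat γ μ lam (1, p) (1, q)

/-- The vector `|0⟩ = e₁^{⊗L}`. -/
def v0 {L : ℕ} : (Fin L → Fin 2) → ℂ :=
  fun p => if p = (fun _ => 0) then 1 else 0

/-- The vector `|0̄⟩ = e₂^{⊗L}`. -/
def v0bar {L : ℕ} : (Fin L → Fin 2) → ℂ :=
  fun p => if p = (fun _ => 1) then 1 else 0

/-! The Yang–Baxter equation for `R`, applied one quantum site at a time (factors acting on
different sites commute), gives the RTT relation
`R₁₂(λ - μ) T₁(λ) T₂(μ) = T₂(μ) T₁(λ) R₁₂(λ - μ)` on `ℂ² ⊗ ℂ² ⊗ (ℂ²)^{⊗L}`. Row and column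
`e₁ ⊗ e₁` (and `e₂ ⊗ e₂`) of `R(λ - μ)` are `a(λ - μ)` times a unit vector, so the entry of the
RTT relation between `e₁ ⊗ e₁` and `e₂ ⊗ e₂` reads `a(λ - μ) B(λ) B(μ) = a(λ - μ) B(μ) B(λ)`, and
likewise for `C`. Hence `B(λ)` and `B(μ)` commute off the countable zero set of `a(λ - μ)`, and
everywhere by continuity in `λ`. -/

open Matrix Kronecker

namespace Matrix

variable {R ι α β : Type*} [CommSemiring R]

def embRight [DecidableEq α] (e : ι ≃ α × β) (N : Matrix β β R) : Matrix ι ι R :=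
  reindex e.symm e.symm ((1 : Matrix α α R) ⊗ₖ N)

lemma embRight_apply [DecidableEq α] (e : ι ≃ α × β) (N : Matrix β β R) (p q : ι) :
    embRight e N p q = (if (e p).1 = (e q).1 then 1 else 0) * N (e p).2 (e q).2 := by
  simp [embRight, one_apply]

variable [Fintype ι] [Fintype α] [Fintype β] [DecidableEq ι] [DecidableEq α] [DecidableEq β]

def embLeft (e : ι ≃ α × β) : Matrix α α R →* Matrix ι ι R where
  toFun M := reindex e.symm e.symm (M ⊗ₖ (1 : Matrix β β R))
  map_one' := by simp
  map_mul' M N := by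
    simp only [reindex_apply, Equiv.symm_symm]
    rw [submatrix_mul_equiv, ← mul_kronecker_mul, mul_one]

lemma embLeft_apply (e : ι ≃ α × β) (M : Matrix α α R) (p q : ι) :
    embLeft e M p q = M (e p).1 (e q).1 * if (e p).2 = (e q).2 then 1 else 0 := by
  simp [embLeft, one_apply]

lemma commute_embLeft_embRight (e : ι ≃ α × β) (M : Matrix α α R) (N : Matrix β β R) :
    Commute (embLeft e M) (embRight e N) := by
  simp [Commute, SemiconjBy, embLeft, embRight, submatrix_mul_equiv, ← mul_kronecker_mul]

end Matrix

theorem list_prod_map_intertwine {M ι : Type*} [Monoid M] (r : M) (a b : ι → M)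
    (hlocal : ∀ i, r * (a i * b i) = b i * a i * r)
    (hcomm : ∀ i j, i ≠ j → Commute (a i) (b j)) {s : List ι} (hs : s.Nodup) :
    r * ((s.map a).prod * (s.map b).prod) = (s.map b).prod * (s.map a).prod * r := by
  induction s with
  | nil => simp
  | cons i t ih =>
    obtain ⟨hi, ht⟩ := List.nodup_cons.mp hs
    have hA : Commute (t.map a).prod (b i) :=
      Commute.list_prod_left _ _ fun x hx => by
        obtain ⟨j, hj, rfl⟩ := List.mem_map.mp hx
        exact hcomm j i (ne_of_mem_of_not_mem hj hi)
    have hB : Commute (a i) (t.map b).prod :=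
      Commute.list_prod_right _ _ fun x hx => by
        obtain ⟨j, hj, rfl⟩ := List.mem_map.mp hx
        exact hcomm i j (ne_of_mem_of_not_mem hj hi).symm
    simp only [List.map_cons, List.prod_cons]
    calc r * (a i * (t.map a).prod * (b i * (t.map b).prod))
        = r * (a i * b i) * ((t.map a).prod * (t.map b).prod) := by
          rw [mul_assoc (a i), ← mul_assoc _ (b i), hA.eq]; simp only [mul_assoc]
      _ = b i * a i * ((t.map b).prod * (t.map a).prod * r) := by
          rw [hlocal, mul_assoc _ r, ih ht]
      _ = b i * (t.map b).prod * (a i * (t.map a).prod) * r := by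
          simp only [mul_assoc]; rw [← mul_assoc (a i), hB.eq, mul_assoc]

section SixVertex

variable (γ : ℂ)

def Rmat12 (u : ℂ) : Matrix (Fin 2 × Fin 2 × Fin 2) (Fin 2 × Fin 2 × Fin 2) ℂ :=
  fun p q => Rmat γ u (p.1, p.2.1) (q.1, q.2.1) * if p.2.2 = q.2.2 then 1 else 0

def Rmat13 (u : ℂ) : Matrix (Fin 2 × Fin 2 × Fin 2) (Fin 2 × Fin 2 × Fin 2) ℂ :=
  fun p q => Rmat γ u (p.1, p.2.2) (q.1, q.2.2) * if p.2.1 = q.2.1 then 1 else 0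

def Rmat23 (u : ℂ) : Matrix (Fin 2 × Fin 2 × Fin 2) (Fin 2 × Fin 2 × Fin 2) ℂ :=
  fun p q => Rmat γ u (p.2.1, p.2.2) (q.2.1, q.2.2) * if p.1 = q.1 then 1 else 0

theorem Rmat_yangBaxter (u y : ℂ) :
    Rmat12 γ u * (Rmat13 γ (u + y) * Rmat23 γ y) =
      Rmat23 γ y * (Rmat13 γ (u + y) * Rmat12 γ u) := by
  ext ⟨a, b, c⟩ ⟨d, e, f⟩
  simp only [Matrix.mul_apply, Fintype.sum_prod_type, Fin.sum_univ_two, Rmat12, Rmat13, Rmat23,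
    Rmat, Prod.mk.injEq]
  fin_cases a <;> fin_cases b <;> fin_cases c <;> fin_cases d <;> fin_cases e <;> fin_cases f <;>
    simp only [Fin.isValue, Fin.zero_eta, Fin.mk_one, zero_ne_one, one_ne_zero, and_true,
      and_false, and_self, ↓reduceIte, mul_one, mul_zero, zero_mul, add_zero, zero_add]
  all_goals first
    | ring1
    | simp only [af, bf, cf, Complex.sinh, Complex.exp_add, Complex.exp_neg]; field_simp; ring1

lemma Rmat_apply_diag_left (u : ℂ) (a : Fin 2) (x : Fin 2 × Fin 2) :
    Rmat γ u (a, a) x = if x = (a, a) then af γ u else 0 := by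
  unfold Rmat
  split_ifs <;> grind

lemma Rmat_apply_diag_right (u : ℂ) (a : Fin 2) (x : Fin 2 × Fin 2) :
    Rmat γ u x (a, a) = if x = (a, a) then af γ u else 0 := by
  unfold Rmat
  split_ifs <;> grind

end SixVertex

section DoubledAuxiliary

variable {n : Type*}

/- `(Fin 2 × Fin 2) × n` models `ℂ² ⊗ ℂ² ⊗ ℂⁿ` with two auxiliary spaces; `onAux₁` and `onAux₂`
let an operator on `ℂ² ⊗ ℂⁿ` act on the first, resp. second, auxiliary space. -/
def auxSplit₁ : (Fin 2 × Fin 2) × n ≃ (Fin 2 × n) × Fin 2 where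
  toFun p := ((p.1.1, p.2), p.1.2)
  invFun q := ((q.1.1, q.2), q.1.2)
  left_inv _ := rfl
  right_inv _ := rfl

def auxSplit₂ : (Fin 2 × Fin 2) × n ≃ (Fin 2 × n) × Fin 2 where
  toFun p := ((p.1.2, p.2), p.1.1)
  invFun q := ((q.2, q.1.1), q.1.2)
  left_inv _ := rfl
  right_inv _ := rfl

variable [Fintype n] [DecidableEq n]

def onAux₁ :
    Matrix (Fin 2 × n) (Fin 2 × n) ℂ →* Matrix ((Fin 2 × Fin 2) × n) ((Fin 2 × Fin 2) × n) ℂ :=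
  embLeft auxSplit₁

def onAux₂ :
    Matrix (Fin 2 × n) (Fin 2 × n) ℂ →* Matrix ((Fin 2 × Fin 2) × n) ((Fin 2 × Fin 2) × n) ℂ :=
  embLeft auxSplit₂

def RmatAux (γ u : ℂ) : Matrix ((Fin 2 × Fin 2) × n) ((Fin 2 × Fin 2) × n) ℂ :=
  Rmat γ u ⊗ₖ 1

end DoubledAuxiliary

section Sites

variable {ι : Type*} [DecidableEq ι]

def siteSplit (i : ι) :
    (Fin 2 × Fin 2) × (ι → Fin 2) ≃ (Fin 2 × Fin 2 × Fin 2) × ({k // k ≠ i} → Fin 2) where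
  toFun p := ((p.1.1, p.1.2, p.2 i), fun k => p.2 k)
  invFun q := ((q.1.1, q.1.2.1), fun k => if h : k = i then q.1.2.2 else q.2 ⟨k, h⟩)
  left_inv p := by
    ext1
    · rfl
    · funext k; by_cases h : k = i <;> simp [h]
  right_inv q := by
    ext1
    · simp
    · funext k; simp [k.2]

def twoSiteSplit {i j : ι} (hij : i ≠ j) :
    (Fin 2 × Fin 2) × (ι → Fin 2) ≃
      (Fin 2 × Fin 2) × (Fin 2 × Fin 2) × ({k // k ≠ i ∧ k ≠ j} → Fin 2) where
  toFun p := ((p.1.1, p.2 i), (p.1.2, p.2 j), fun k => p.2 k)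
  invFun q := ((q.1.1, q.2.1.1),
    fun k => if h : k = i then q.1.2 else if h' : k = j then q.2.1.2 else q.2.2 ⟨k, h, h'⟩)
  left_inv p := by
    ext1
    · rfl
    · funext k
      by_cases h : k = i
      · subst h; simp
      by_cases h' : k = j
      · subst h'; simp [h]
      simp [h, h']
  right_inv q := by
    ext1
    · simp
    · ext1
      · simp [hij.symm]
      · funext k; simp [k.2.1, k.2.2]

end Sites

section Monodromy

variable (γ : ℂ) {L : ℕ}

lemma onAux₁_Rai (u : ℂ) (i : Fin L) :
    onAux₁ (Rai γ u i) = embLeft (siteSplit i) (Rmat13 γ u) := by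
  ext p q
  simp only [onAux₁, embLeft_apply, auxSplit₁, siteSplit, Equiv.coe_fn_mk, Rai, Rmat13,
    funext_iff, Subtype.forall]
  split_ifs <;> grind

lemma onAux₂_Rai (u : ℂ) (i : Fin L) :
    onAux₂ (Rai γ u i) = embLeft (siteSplit i) (Rmat23 γ u) := by
  ext p q
  simp only [onAux₂, embLeft_apply, auxSplit₂, siteSplit, Equiv.coe_fn_mk, Rai, Rmat23,
    funext_iff, Subtype.forall]
  split_ifs <;> grind

lemma RmatAux_eq_embLeft_siteSplit (u : ℂ) (i : Fin L) :
    RmatAux γ u = embLeft (siteSplit i) (Rmat12 γ u) := by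
  ext p q
  simp only [RmatAux, kroneckerMap_apply, one_apply, embLeft_apply, siteSplit, Equiv.coe_fn_mk,
    Rmat12, funext_iff, Subtype.forall]
  split_ifs <;> grind

lemma onAux₁_Rai_eq_embLeft_twoSiteSplit (u : ℂ) {i j : Fin L} (hij : i ≠ j) :
    onAux₁ (Rai γ u i) = embLeft (twoSiteSplit hij) (Rmat γ u) := by
  ext p q
  simp only [onAux₁, embLeft_apply, auxSplit₁, twoSiteSplit, Equiv.coe_fn_mk, Rai, funext_iff,
    Subtype.forall, Prod.mk.injEq]
  split_ifs <;> grind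

lemma onAux₂_Rai_eq_embRight_twoSiteSplit (u : ℂ) {i j : Fin L} (hij : i ≠ j) :
    onAux₂ (Rai γ u j) = embRight (twoSiteSplit hij) (Rmat γ u ⊗ₖ 1) := by
  ext p q
  simp only [onAux₂, embLeft_apply, embRight_apply, auxSplit₂, twoSiteSplit, Equiv.coe_fn_mk,
    Rai, kroneckerMap_apply, one_apply, funext_iff, Subtype.forall, Prod.mk.injEq]
  split_ifs <;> grind

lemma rtt_site (u y : ℂ) (i : Fin L) :
    RmatAux γ u * (onAux₁ (Rai γ (u + y) i) * onAux₂ (Rai γ y i)) =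
      onAux₂ (Rai γ y i) * onAux₁ (Rai γ (u + y) i) * RmatAux γ u := by
  simp only [RmatAux_eq_embLeft_siteSplit γ u i, onAux₁_Rai, onAux₂_Rai, ← map_mul,
    Rmat_yangBaxter, mul_assoc]

lemma commute_onAux₁_Rai_onAux₂_Rai (u v : ℂ) {i j : Fin L} (hij : i ≠ j) :
    Commute (onAux₁ (Rai γ u i)) (onAux₂ (Rai γ v j)) := by
  rw [onAux₁_Rai_eq_embLeft_twoSiteSplit γ u hij, onAux₂_Rai_eq_embRight_twoSiteSplit γ v hij]
  exact commute_embLeft_embRight _ _ _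

theorem rtt_relation (μ : Fin L → ℂ) (l m : ℂ) :
    RmatAux γ (l - m) * (onAux₁ (Tmat γ μ l) * onAux₂ (Tmat γ μ m)) =
      onAux₂ (Tmat γ μ m) * onAux₁ (Tmat γ μ l) * RmatAux γ (l - m) := by
  simp only [Tmat, List.ofFn_eq_map, map_list_prod, List.map_map]
  refine list_prod_map_intertwine _ _ _ (fun i => ?_)
    (fun i j hij => commute_onAux₁_Rai_onAux₂_Rai γ _ _ hij) (List.nodup_finRange L)
  simpa only [Function.comp_apply, sub_add_sub_cancel] using rtt_site γ (l - m) (m - μ i) i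

end Monodromy

section Extraction

variable {n : Type*} [Fintype n] [DecidableEq n] (γ u : ℂ)

lemma RmatAux_mul_apply_diag (Y : Matrix ((Fin 2 × Fin 2) × n) ((Fin 2 × Fin 2) × n) ℂ)
    (a : Fin 2) (p : n) (r : (Fin 2 × Fin 2) × n) :
    (RmatAux (n := n) γ u * Y) ((a, a), p) r = af γ u * Y ((a, a), p) r := by
  simp [RmatAux, mul_apply, Fintype.sum_prod_type, Rmat_apply_diag_left, one_apply]

lemma mul_RmatAux_apply_diag (Y : Matrix ((Fin 2 × Fin 2) × n) ((Fin 2 × Fin 2) × n) ℂ)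
    (a : Fin 2) (q : n) (r : (Fin 2 × Fin 2) × n) :
    (Y * RmatAux (n := n) γ u) r ((a, a), q) = Y r ((a, a), q) * af γ u := by
  simp [RmatAux, mul_apply, Fintype.sum_prod_type, Rmat_apply_diag_right, one_apply]

variable {γ u}

lemma onAux₁_mul_onAux₂_apply (X Y : Matrix (Fin 2 × n) (Fin 2 × n) ℂ) (a b c d : Fin 2)
    (p q : n) :
    (onAux₁ X * onAux₂ Y) ((a, b), p) ((c, d), q) = ∑ g, X (a, p) (c, g) * Y (b, g) (d, q) := by
  simp [onAux₁, onAux₂, embLeft_apply, auxSplit₁, auxSplit₂, mul_apply, Fintype.sum_prod_type]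

lemma onAux₂_mul_onAux₁_apply (X Y : Matrix (Fin 2 × n) (Fin 2 × n) ℂ) (a b c d : Fin 2)
    (p q : n) :
    (onAux₂ Y * onAux₁ X) ((a, b), p) ((c, d), q) = ∑ g, Y (b, p) (d, g) * X (a, g) (c, q) := by
  simp [onAux₁, onAux₂, embLeft_apply, auxSplit₁, auxSplit₂, mul_apply, Fintype.sum_prod_type]

theorem submatrix_commute_of_rtt (hu : af γ u ≠ 0) {X Y : Matrix (Fin 2 × n) (Fin 2 × n) ℂ}
    (h : RmatAux γ u * (onAux₁ X * onAux₂ Y) = onAux₂ Y * onAux₁ X * RmatAux γ u) (a b : Fin 2) :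
    X.submatrix (Prod.mk a) (Prod.mk b) * Y.submatrix (Prod.mk a) (Prod.mk b) =
      Y.submatrix (Prod.mk a) (Prod.mk b) * X.submatrix (Prod.mk a) (Prod.mk b) := by
  ext p q
  have hpq := congr_fun₂ h ((a, a), p) ((b, b), q)
  rw [RmatAux_mul_apply_diag, mul_RmatAux_apply_diag, onAux₁_mul_onAux₂_apply,
    onAux₂_mul_onAux₁_apply, mul_comm _ (af γ u)] at hpq
  simpa [mul_apply] using mul_left_cancel₀ hu hpq

end Extraction

lemma continuous_Tmat (γ : ℂ) {L : ℕ} (μ : Fin L → ℂ) : Continuous fun lam => Tmat γ μ lam := by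
  have hR : ∀ i, Continuous fun lam => Rai γ (lam - μ i) i := fun i => by
    refine continuous_pi fun p => continuous_pi fun q => ?_
    unfold Rai Rmat af bf cf
    split_ifs <;> fun_prop
  simpa only [Tmat, List.ofFn_eq_map] using continuous_list_prod _ fun i _ => hR i

lemma Complex.countable_setOf_sinh_eq_zero : {z : ℂ | Complex.sinh z = 0}.Countable := by
  have hsin : {w : ℂ | Complex.sin w = 0} ⊆ Set.range fun k : ℤ => (k * Real.pi : ℂ) :=
    fun w hw => by
      obtain ⟨k, hk⟩ := Complex.sin_eq_zero_iff.mp hw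
      exact ⟨k, hk.symm⟩
  refine ((Set.countable_range _).mono hsin).preimage (f := (· * Complex.I))
    (mul_left_injective₀ Complex.I_ne_zero) |>.mono fun z hz => ?_
  simp_all [Complex.sin_mul_I]

lemma dense_setOf_af_sub_ne_zero (γ m : ℂ) : Dense {l : ℂ | af γ (l - m) ≠ 0} := by
  have : {l : ℂ | af γ (l - m) = 0}.Countable :=
    Complex.countable_setOf_sinh_eq_zero.preimage (f := fun l => l - m + γ)
      fun x y h => by simpa using h
  simpa only [Set.compl_ofPred, ne_eq] using this.dense_compl ℂ

lemma Tmat_submatrix_commute (γ : ℂ) {L : ℕ} (μ : Fin L → ℂ) (a b : Fin 2) (l m : ℂ) :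
    (Tmat γ μ l).submatrix (Prod.mk a) (Prod.mk b) *
        (Tmat γ μ m).submatrix (Prod.mk a) (Prod.mk b) =
      (Tmat γ μ m).submatrix (Prod.mk a) (Prod.mk b) *
        (Tmat γ μ l).submatrix (Prod.mk a) (Prod.mk b) := by
  have hblock : Continuous fun l => (Tmat γ μ l).submatrix (Prod.mk a) (Prod.mk b) :=
    (continuous_Tmat γ μ).matrix_submatrix _ _
  refine congrFun (Continuous.ext_on (dense_setOf_af_sub_ne_zero γ m)
    (hblock.mul continuous_const) (continuous_const.mul hblock) fun l' hl' => ?_) l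
  exact submatrix_commute_of_rtt hl' (rtt_relation γ μ l' m) a b

theorem six_vertex_B_C_commute_general (γ : ℂ) (L : ℕ) (μ : Fin L → ℂ)
    (l m : ℂ) :
    Bop γ μ l * Bop γ μ m = Bop γ μ m * Bop γ μ l ∧
      Cop γ μ l * Cop γ μ m = Cop γ μ m * Cop γ μ l :=
  ⟨Tmat_submatrix_commute γ μ 0 1 l m, Tmat_submatrix_commute γ μ 1 0 l m⟩

/-- The creation operators `B` and the annihilation operators `C` form
commutative families. -/
theorem six_vertex_B_C_commute (γ : ℂ) (L : ℕ) (hL : 1 ≤ L) (μ : Fin L → ℂ)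
    (l m : ℂ) :
    Bop γ μ l * Bop γ μ m = Bop γ μ m * Bop γ μ l ∧
      Cop γ μ l * Cop γ μ m = Cop γ μ m * Cop γ μ l :=
  six_vertex_B_C_commute_general γ L μ l m

end
end

section
/- Degree 2n+1 Yang–Baxter relation for D: let n ≥ 1 and λ₀, λ₁^B,…,λ_n^B, λ₁^C,…,λ_n^C ∈ ℂ be such that all the sinh-denominators occurring below are nonzero. Then, as operators on (ℂ²)^{⊗L}: ∏_{i=1}^{n} [a(λ₀−λ_i^C)/b(λ₀−λ_i^C)] D(λ₀) C(λ_n^C)⋯C(λ₁^C) B(λ₁^B)⋯B(λ_n^B) − ∑_{i=1}^{n} [c(λ₀−λ_i^C)/b(λ₀−λ_i^C)] ∏_{j≠i} [a(λ_i^C−λ_j^C)/b(λ_i^C−λ_j^C)] D(λ_i^C) C(λ_n^C)⋯C(λ_{i+1}^C) C(λ_{i−1}^C)⋯C(λ₁^C) C(λ₀) B(λ₁^B)⋯B(λ_n^B) = ∏_{i=1}^{n} [a(λ₀−λ_i^B)/b(λ₀−λ_i^B)] C(λ_n^C)⋯C(λ₁^C) B(λ₁^B)⋯B(λ_n^B)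 D(λ₀) − ∑_{i=1}^{n} [c(λ₀−λ_i^B)/b(λ₀−λ_i^B)] ∏_{j≠i} [a(λ_i^B−λ_j^B)/b(λ_i^B−λ_j^B)] C(λ_n^C)⋯C(λ₁^C) B(λ₀) B(λ₁^B)⋯B(λ_{i−1}^B) B(λ_{i+1}^B)⋯B(λ_n^B) D(λ_i^B). -/
noncomputable section

/-- The ordered product `C(λ_n^C) ⋯ C(λ₁^C)`. -/
def CprodRev (γ : ℂ) {L : ℕ} (μ : Fin L → ℂ) {n : ℕ} (lamC : Fin n → ℂ) :
    Matrix (Fin L → Fin 2) (Fin L → Fin 2) ℂ :=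
  ((List.ofFn fun i : Fin n => Cop γ μ (lamC i)).reverse).prod

/-- The ordered product `B(λ₁^B) ⋯ B(λ_n^B)`. -/
def Bprod (γ : ℂ) {L : ℕ} (μ : Fin L → ℂ) {n : ℕ} (lamB : Fin n → ℂ) :
    Matrix (Fin L → Fin 2) (Fin L → Fin 2) ℂ :=
  (List.ofFn fun i : Fin n => Bop γ μ (lamB i)).prod

/-!
The RTT relation `R₁₂(λ-ν) T₁(λ) T₂(ν) = T₂(ν) T₁(λ) R₁₂(λ-ν)` follows from the Yang–Baxter
equation of `R`, applied one quantum site at a time: operators on different sites commute, so the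
local relations can be pushed through the products defining `T`. Its entries give
`D(λ) B(ν) = (a/b)(λ-ν) B(ν) D(λ) - (c/b)(λ-ν) B(λ) D(ν)`, the mirror relation for `C(ν) D(λ)`,
and `a(λ-ν) [B(λ), B(ν)] = a(λ-ν) [C(λ), C(ν)] = 0`. Moving `D(λ₀)` to the right through
`B(λ₁) ⋯ B(λₙ)` by induction on `n`, the two families of unwanted terms produced at each step merge
through a three-term `sinh` identity. Moving `D(λ₀)` to the left through `C(λₙ) ⋯ C(λ₁)` is the same
computation in the opposite ring. Both sides of the theorem then equal
`C(λₙ) ⋯ C(λ₁) D(λ₀) B(λ₁) ⋯ B(λₙ)`.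
-/

namespace Matrix

section SiteOp

variable {ι α R : Type*} [Fintype ι] [DecidableEq ι] [Fintype α] [DecidableEq α]

/-- `f` acting on the `i`-th tensor factor of `(α → R)^{⊗ ι}`. -/
def siteOp [Semiring R] (i : ι) : Matrix α α R →+* Matrix (ι → α) (ι → α) R :=
  (reindexRingEquiv R (Equiv.funSplitAt i α).symm).toRingHom.comp
    ((blockDiagonalRingHom α ({j // j ≠ i} → α) R).comp (Pi.constRingHom _ _))

theorem siteOp_apply [Semiring R] (i : ι) (f : Matrix α α R) (p q : ι → α) :
    siteOp i f p q = if ∀ k, k ≠ i → p k = q k then f (p i) (q i) else 0 := by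
  simp [siteOp, blockDiagonal_apply, funext_iff]

theorem siteOp_mul_siteOp_apply [CommSemiring R] {i j : ι} (hij : i ≠ j) (f g : Matrix α α R)
    (p q : ι → α) :
    (siteOp i f * siteOp j g) p q =
      if ∀ k, k ≠ i → k ≠ j → p k = q k then f (p i) (q i) * g (p j) (q j) else 0 := by
  rw [mul_apply, Finset.sum_eq_single (Function.update p i (q i))]
  · have hcond : (∀ k, k ≠ j → Function.update p i (q i) k = q k) ↔
        ∀ k, k ≠ i → k ≠ j → p k = q k := by
      refine ⟨fun h k hi hj => by simpa [hi] using h k hj, fun h k hj => ?_⟩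
      by_cases hi : k = i
      · simp [hi]
      · simpa [hi] using h k hi hj
    simp +contextual only [siteOp_apply, Function.update_self, Function.update_of_ne hij.symm,
      Function.update_of_ne, ne_eq, not_false_eq_true, implies_true, if_true, hcond]
    split_ifs <;> simp
  · intro r _ hr
    simp only [siteOp_apply]
    split_ifs with hp hq <;> try simp only [zero_mul, mul_zero]
    refine absurd (funext fun k => ?_) hr
    by_cases hk : k = i
    · subst hk; simp [hq k hij]
    · simp [hk, hp k hk]
  · simp

theorem siteOp_commute [CommSemiring R] {i j : ι} (hij : i ≠ j) (f g : Matrix α α R) :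
    Commute (siteOp i f) (siteOp j g) := by
  ext p q
  rw [siteOp_mul_siteOp_apply hij, siteOp_mul_siteOp_apply hij.symm, mul_comm]
  simp only [ne_eq]
  congr 1
  exact propext ⟨fun h k hj hi => h k hi hj, fun h k hi hj => h k hj hi⟩

theorem siteOp_algebraMap [CommSemiring R] (i : ι) (c : R) :
    siteOp i (algebraMap R (Matrix α α R) c) = algebraMap R _ c := by
  ext p q
  simp only [siteOp_apply, algebraMap_matrix_apply]
  by_cases hpq : p = q
  · simp [hpq]
  · have : ¬((∀ k, k ≠ i → p k = q k) ∧ p i = q i) := fun h =>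
      hpq (funext fun k => if hk : k = i then hk ▸ h.2 else h.1 k hk)
    simp only [hpq, if_false]
    split_ifs <;> simp_all

end SiteOp

section Kron

variable {m A : Type*} [Fintype m] [DecidableEq m] [Semiring A]

/-- `X ⊗ 1`. Mathlib's `kronecker` API needs commuting entries, which operator blocks lack. -/
def kronOne : Matrix m m A →+* Matrix (m × m) (m × m) A :=
  (blockDiagonalRingHom m m A).comp (Pi.constRingHom m _)

def oneKron : Matrix m m A →+* Matrix (m × m) (m × m) A :=
  (reindexRingEquiv A (Equiv.prodComm m m)).toRingHom.comp kronOne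

theorem kronOne_apply (X : Matrix m m A) (p q : m × m) :
    kronOne X p q = if p.2 = q.2 then X p.1 q.1 else 0 := by
  simp [kronOne, blockDiagonal_apply]

theorem oneKron_apply (X : Matrix m m A) (p q : m × m) :
    oneKron X p q = if p.1 = q.1 then X p.2 q.2 else 0 := by
  simp [oneKron, kronOne_apply]

theorem kronOne_mul_oneKron_apply (X Y : Matrix m m A) (p q : m × m) :
    (kronOne X * oneKron Y) p q = X p.1 q.1 * Y p.2 q.2 := by
  simp [mul_apply, kronOne_apply, oneKron_apply, Fintype.sum_prod_type]

theorem oneKron_mul_kronOne_apply (X Y : Matrix m m A) (p q : m × m) :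
    (oneKron Y * kronOne X) p q = Y p.2 q.2 * X p.1 q.1 := by
  simp [mul_apply, kronOne_apply, oneKron_apply, Fintype.sum_prod_type]

theorem commute_kronOne_oneKron {X Y : Matrix m m A}
    (h : ∀ a b c d, Commute (X a b) (Y c d)) : Commute (kronOne X) (oneKron Y) := by
  ext p q
  rw [kronOne_mul_oneKron_apply, oneKron_mul_kronOne_apply, (h _ _ _ _).eq]

theorem kronOne_mapMatrix {B : Type*} [Semiring B] (f : A →+* B) (X : Matrix m m A) :
    kronOne (f.mapMatrix X) = f.mapMatrix (kronOne X) := by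
  ext p q
  simp [kronOne_apply, apply_ite f]

theorem oneKron_mapMatrix {B : Type*} [Semiring B] (f : A →+* B) (X : Matrix m m A) :
    oneKron (f.mapMatrix X) = f.mapMatrix (oneKron X) := by
  ext p q
  simp [oneKron_apply, apply_ite f]

end Kron

end Matrix

open Matrix

theorem List.prod_map_intertwine {M ι : Type*} [Monoid M] (R : M) (U D : ι → M)
    (hloc : ∀ k, R * U k * D k = D k * U k * R) (hcomm : ∀ k l, k ≠ l → Commute (U k) (D l)) :
    ∀ l : List ι, l.Nodup →
      R * (l.map U).prod * (l.map D).prod = (l.map D).prod * (l.map U).prod * R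
  | [], _ => by simp
  | k :: t, hl => by
    obtain ⟨hk, ht⟩ := List.nodup_cons.mp hl
    have hU : Commute (U k) (t.map D).prod := Commute.list_prod_right _ _ fun x hx => by
      obtain ⟨l, hl, rfl⟩ := List.mem_map.mp hx
      exact hcomm k l fun h => hk (h ▸ hl)
    have hD : Commute (t.map U).prod (D k) := (Commute.list_prod_right _ _ fun x hx => by
      obtain ⟨l, hl, rfl⟩ := List.mem_map.mp hx
      exact (hcomm l k fun h => hk (h ▸ hl)).symm).symm
    simp only [List.map_cons, List.prod_cons]
    calc R * (U k * (t.map U).prod) * (D k * (t.map D).prod)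
        = R * U k * D k * ((t.map U).prod * (t.map D).prod) := by
          simp only [mul_assoc, ← mul_assoc (t.map U).prod, hD.eq]
      _ = D k * U k * (R * (t.map U).prod * (t.map D).prod) := by
          rw [hloc]; simp only [mul_assoc]
      _ = D k * (t.map D).prod * (U k * (t.map U).prod) * R := by
          rw [List.prod_map_intertwine R U D hloc hcomm t ht]
          simp only [mul_assoc, ← mul_assoc (U k) (t.map D).prod, hU.eq]

theorem Fin.prod_univ_erase_zero {M : Type*} [CommMonoid M] {n : ℕ} (f : Fin (n + 1) → M) :
    ∏ j ∈ Finset.univ.erase 0, f j = ∏ j : Fin n, f j.succ := by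
  rw [Fin.univ_succ, Finset.erase_cons, Finset.prod_map]
  rfl

theorem Fin.prod_univ_erase_succ {M : Type*} [CommMonoid M] {n : ℕ} (f : Fin (n + 1) → M)
    (i : Fin n) :
    ∏ j ∈ Finset.univ.erase i.succ, f j = f 0 * ∏ j ∈ Finset.univ.erase i, f j.succ := by
  have hmap : (Finset.univ.map ⟨Fin.succ, Fin.succ_injective n⟩).erase i.succ =
      (Finset.univ.erase i).map ⟨Fin.succ, Fin.succ_injective n⟩ :=
    (Finset.map_erase _ _ _).symm
  rw [Fin.univ_succ, Finset.erase_cons_of_ne _ (Fin.succ_ne_zero i).symm, Finset.prod_cons, hmap,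
    Finset.prod_map]
  rfl

theorem eq_div_smul_sub_div_smul {K A : Type*} [Field K] [AddCommGroup A] [Module K A]
    {a b c : K} {X Y Z : A} (hb : b ≠ 0) (h : b • X = a • Y - c • Z) :
    X = (a / b) • Y - (c / b) • Z := by
  rw [div_eq_inv_mul, div_eq_inv_mul, mul_smul, mul_smul, ← smul_sub, ← h, inv_smul_smul₀ hb]

theorem dense_setOf_sinh_add_ne_zero (c : ℂ) : Dense {x : ℂ | Complex.sinh (x + c) ≠ 0} := by
  have hzeros : {x : ℂ | Complex.sinh (x + c) = 0}.Countable := by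
    refine (Set.countable_range fun k : ℤ => -(k * Real.pi * Complex.I) - c).mono fun x hx => ?_
    obtain ⟨k, hk⟩ := Complex.sin_eq_zero_iff.mp
      (show Complex.sin ((x + c) * Complex.I) = 0 by rw [Complex.sin_mul_I, hx, zero_mul])
    exact ⟨k, by linear_combination Complex.I * hk - (x + c) * Complex.I_sq⟩
  simpa only [Set.compl_ofPred, ne_eq] using hzeros.dense_compl ℂ

theorem eq_of_forall_sinh_add_smul_eq {E : Type*} [AddCommGroup E] [Module ℂ E]
    [NoZeroSMulDivisors ℂ E] [TopologicalSpace E] [T2Space E] {F G : ℂ → E}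
    (hF : Continuous F) (hG : Continuous G) (c : ℂ)
    (h : ∀ x, Complex.sinh (x + c) • F x = Complex.sinh (x + c) • G x) : F = G :=
  hF.ext_on (dense_setOf_sinh_add_ne_zero c) hG fun x hx => smul_right_injective E hx (h x)

theorem exchange_coeff_identity (γ u v w : ℂ) (huv : bf (u - v) ≠ 0) (huw : bf (u - w) ≠ 0)
    (hwv : bf (w - v) ≠ 0) :
    af γ (u - v) / bf (u - v) * (cf γ (u - w) / bf (u - w))
        - cf γ (u - v) / bf (u - v) * (cf γ (v - w) / bf (v - w)) =
      cf γ (u - w) / bf (u - w) * (af γ (w - v) / bf (w - v)) := by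
  unfold af bf cf at *
  rw [show u - w = (u - v) + (v - w) by ring, show w - v = -(v - w) by ring] at *
  generalize u - v = x at *
  generalize v - w = y at *
  rw [Complex.sinh_neg] at *
  have hy : Complex.sinh y ≠ 0 := neg_ne_zero.mp hwv
  field_simp
  simp only [Complex.sinh_add, Complex.sinh_neg, Complex.cosh_neg]
  ring

theorem mul_list_prod_of_exchange {A : Type*} [Ring A] [Algebra ℂ A] (γ : ℂ) {B D : ℂ → A}
    (hB : ∀ x y, Commute (B x) (B y))
    (hDB : ∀ x y, bf (x - y) ≠ 0 → D x * B y =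
      (af γ (x - y) / bf (x - y)) • (B y * D x) - (cf γ (x - y) / bf (x - y)) • (B x * D y)) :
    ∀ {n : ℕ} (lam0 : ℂ) (lam : Fin n → ℂ), (∀ i, bf (lam0 - lam i) ≠ 0) →
      (∀ i j, j ≠ i → bf (lam i - lam j) ≠ 0) →
      D lam0 * (List.ofFn fun i => B (lam i)).prod =
        (∏ i, af γ (lam0 - lam i) / bf (lam0 - lam i)) •
            ((List.ofFn fun i => B (lam i)).prod * D lam0)
          - ∑ i, ((cf γ (lam0 - lam i) / bf (lam0 - lam i)) *
                ∏ j ∈ Finset.univ.erase i, af γ (lam i - lam j) / bf (lam i - lam j)) •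
              ((B lam0 :: (List.ofFn fun j => B (lam j)).eraseIdx i).prod * D (lam i))
  | 0, _, _, _, _ => by simp
  | n + 1, lam0, lam, h0, hlam => by
    have hlam' : ∀ i j : Fin n, j ≠ i → bf (lam i.succ - lam j.succ) ≠ 0 :=
      fun i j hij => hlam _ _ (Fin.succ_injective _ |>.ne hij)
    have IH0 := mul_list_prod_of_exchange γ hB hDB lam0 (fun i => lam i.succ) (fun i => h0 _)
      hlam'
    have IH1 := mul_list_prod_of_exchange γ hB hDB (lam 0) (fun i => lam i.succ)
      (fun i => hlam _ _ (Fin.succ_ne_zero i)) hlam'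
    -- `B(λ₀) B(λ₁) ⋯ D(λ_{k+1})` comes from both `IH0` and `IH1`; the coefficients merge here.
    have hcoeff : ∀ k : Fin n,
        cf γ (lam0 - lam k.succ) / bf (lam0 - lam k.succ) *
            ∏ j ∈ Finset.univ.erase k.succ, af γ (lam k.succ - lam j) / bf (lam k.succ - lam j) =
          af γ (lam0 - lam 0) / bf (lam0 - lam 0) *
              (cf γ (lam0 - lam k.succ) / bf (lam0 - lam k.succ) *
                ∏ j ∈ Finset.univ.erase k, af γ (lam k.succ - lam j.succ) /
                  bf (lam k.succ - lam j.succ))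
            - cf γ (lam0 - lam 0) / bf (lam0 - lam 0) *
              (cf γ (lam 0 - lam k.succ) / bf (lam 0 - lam k.succ) *
                ∏ j ∈ Finset.univ.erase k, af γ (lam k.succ - lam j.succ) /
                  bf (lam k.succ - lam j.succ)) := by
      intro k
      rw [Fin.prod_univ_erase_succ]
      linear_combination (∏ j ∈ Finset.univ.erase k, af γ (lam k.succ - lam j.succ) /
          bf (lam k.succ - lam j.succ)) *
        (exchange_coeff_identity γ lam0 (lam 0) (lam k.succ) (h0 0) (h0 k.succ)
          (hlam _ _ (Fin.succ_ne_zero k).symm)).symm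
    rw [List.ofFn_succ, List.prod_cons, ← mul_assoc, hDB _ _ (h0 0), sub_mul, smul_mul_assoc,
      smul_mul_assoc, mul_assoc, mul_assoc, IH0, IH1]
    simp only [Fin.prod_univ_succ, Fin.sum_univ_succ, Fin.prod_univ_erase_zero,
      List.eraseIdx_cons_zero, List.eraseIdx_cons_succ, Fin.val_succ, Fin.val_zero,
      mul_sub, mul_smul_comm, Finset.mul_sum, List.prod_cons, mul_assoc,
      ← (hB lam0 (lam 0)).left_comm]
    simp only [hcoeff, sub_smul, ← smul_smul, Finset.sum_sub_distrib, ← Finset.smul_sum]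
    module

/-- `R(u)` as a `2 × 2` matrix, indexed by the auxiliary space, of operators on one quantum
site. -/
def RmatBlocks (γ u : ℂ) : Matrix (Fin 2) (Fin 2) (Matrix (Fin 2) (Fin 2) ℂ) :=
  (comp (Fin 2) (Fin 2) (Fin 2) (Fin 2) ℂ).symm (Rmat γ u)

theorem Rmat_yangBaxter_s7 (γ u v : ℂ) :
    (Rmat γ (u - v)).map (algebraMap ℂ (Matrix (Fin 2) (Fin 2) ℂ)) *
        kronOne (RmatBlocks γ u) * oneKron (RmatBlocks γ v) =
      oneKron (RmatBlocks γ v) * kronOne (RmatBlocks γ u) *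
        (Rmat γ (u - v)).map (algebraMap ℂ (Matrix (Fin 2) (Fin 2) ℂ)) := by
  ext ⟨a, b⟩ ⟨c, d⟩ x y
  rw [mul_assoc, mul_apply, mul_apply]
  simp only [kronOne_mul_oneKron_apply, oneKron_mul_kronOne_apply, map_apply,
    Algebra.algebraMap_eq_smul_one]
  simp only [Fintype.sum_prod_type, Fin.sum_univ_two, smul_mul_assoc, mul_smul_comm, one_mul,
    mul_one, Matrix.add_apply, Matrix.smul_apply, Matrix.mul_apply, RmatBlocks, comp_symm_apply,
    smul_eq_mul]
  fin_cases a <;> fin_cases b <;> fin_cases c <;> fin_cases d <;> fin_cases x <;> fin_cases y <;>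
    simp [Rmat, af, bf, cf, -mul_eq_mul_left_iff, -mul_eq_mul_right_iff] <;>
    simp only [Complex.sinh, Complex.exp_add, Complex.exp_sub, Complex.exp_neg] <;>
    field_simp <;> ring

theorem blocks_Rai (γ u : ℂ) {L : ℕ} (i : Fin L) :
    (compRingEquiv (Fin 2) (Fin L → Fin 2) ℂ).symm (Rai γ u i) =
      (siteOp i).mapMatrix (RmatBlocks γ u) := by
  ext a c p q
  simp [Rai, siteOp_apply, RmatBlocks, compRingEquiv_symm_apply]

theorem blocks_Tmat_eq_prod (γ : ℂ) {L : ℕ} (μ : Fin L → ℂ) (lam : ℂ) :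
    (compRingEquiv (Fin 2) (Fin L → Fin 2) ℂ).symm (Tmat γ μ lam) =
      ((List.finRange L).map fun i => (siteOp i).mapMatrix (RmatBlocks γ (lam - μ i))).prod := by
  rw [Tmat, map_list_prod, List.ofFn_eq_map, List.map_map]
  simp only [Function.comp_def, blocks_Rai]

theorem blocks_Tmat (γ : ℂ) {L : ℕ} (μ : Fin L → ℂ) (lam : ℂ) :
    (compRingEquiv (Fin 2) (Fin L → Fin 2) ℂ).symm (Tmat γ μ lam) =
      !![Aop γ μ lam, Bop γ μ lam; Cop γ μ lam, Dop γ μ lam] := by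
  ext a c : 2
  fin_cases a <;> fin_cases c <;> rfl

theorem Tmat_rtt (γ : ℂ) {L : ℕ} (μ : Fin L → ℂ) (lam ν : ℂ) :
    (Rmat γ (lam - ν)).map (algebraMap ℂ _) *
        kronOne ((compRingEquiv (Fin 2) (Fin L → Fin 2) ℂ).symm (Tmat γ μ lam)) *
        oneKron ((compRingEquiv (Fin 2) (Fin L → Fin 2) ℂ).symm (Tmat γ μ ν)) =
      oneKron ((compRingEquiv (Fin 2) (Fin L → Fin 2) ℂ).symm (Tmat γ μ ν)) *
        kronOne ((compRingEquiv (Fin 2) (Fin L → Fin 2) ℂ).symm (Tmat γ μ lam)) *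
        (Rmat γ (lam - ν)).map (algebraMap ℂ _) := by
  rw [blocks_Tmat_eq_prod, blocks_Tmat_eq_prod, map_list_prod kronOne, map_list_prod oneKron,
    List.map_map, List.map_map]
  refine List.prod_map_intertwine _ _ _ (fun k => ?_) (fun k l hkl => ?_) _
    (List.nodup_finRange L)
  · have hR : (siteOp k).mapMatrix
        ((Rmat γ (lam - ν)).map (algebraMap ℂ (Matrix (Fin 2) (Fin 2) ℂ))) =
          (Rmat γ (lam - ν)).map (algebraMap ℂ _) := by
      ext p q : 1
      simp [siteOp_algebraMap]
    simpa only [Function.comp_apply, map_mul, ← kronOne_mapMatrix, ← oneKron_mapMatrix,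
      sub_sub_sub_cancel_right, hR] using
      congrArg (siteOp k).mapMatrix (Rmat_yangBaxter_s7 γ (lam - μ k) (ν - μ k))
  · exact commute_kronOne_oneKron fun a b c d => siteOp_commute hkl _ _

theorem Tmat_rtt_apply (γ : ℂ) {L : ℕ} (μ : Fin L → ℂ) (lam ν : ℂ) (p q : Fin 2 × Fin 2) :
    ∑ r, Rmat γ (lam - ν) p r •
        (!![Aop γ μ lam, Bop γ μ lam; Cop γ μ lam, Dop γ μ lam] r.1 q.1 *
          !![Aop γ μ ν, Bop γ μ ν; Cop γ μ ν, Dop γ μ ν] r.2 q.2) =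
      ∑ r, Rmat γ (lam - ν) r q •
        (!![Aop γ μ ν, Bop γ μ ν; Cop γ μ ν, Dop γ μ ν] p.2 r.2 *
          !![Aop γ μ lam, Bop γ μ lam; Cop γ μ lam, Dop γ μ lam] p.1 r.1) := by
  have h := congrFun (congrFun (Tmat_rtt γ μ lam ν) p) q
  rw [mul_assoc, mul_apply, mul_apply] at h
  simpa only [kronOne_mul_oneKron_apply, oneKron_mul_kronOne_apply, map_apply,
    Algebra.smul_def, Algebra.commutes, blocks_Tmat] using h

section Exchange

variable (γ : ℂ) {L : ℕ} (μ : Fin L → ℂ)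

theorem Dop_mul_Cop_rtt (lam ν : ℂ) :
    af γ (lam - ν) • (Dop γ μ lam * Cop γ μ ν) =
      cf γ (lam - ν) • (Dop γ μ ν * Cop γ μ lam) + bf (lam - ν) • (Cop γ μ ν * Dop γ μ lam) := by
  simpa [Fintype.sum_prod_type, Rmat] using Tmat_rtt_apply γ μ lam ν (1, 1) (1, 0)

theorem Dop_mul_Bop_rtt (lam ν : ℂ) :
    cf γ (lam - ν) • (Bop γ μ lam * Dop γ μ ν) + bf (lam - ν) • (Dop γ μ lam * Bop γ μ ν) =
      af γ (lam - ν) • (Bop γ μ ν * Dop γ μ lam) := by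
  simpa [Fintype.sum_prod_type, Rmat] using Tmat_rtt_apply γ μ lam ν (1, 0) (1, 1)

theorem Cop_mul_Cop_rtt (lam ν : ℂ) :
    af γ (lam - ν) • (Cop γ μ lam * Cop γ μ ν) = af γ (lam - ν) • (Cop γ μ ν * Cop γ μ lam) := by
  simpa [Fintype.sum_prod_type, Rmat] using Tmat_rtt_apply γ μ lam ν (1, 1) (0, 0)

theorem Bop_mul_Bop_rtt (lam ν : ℂ) :
    af γ (lam - ν) • (Bop γ μ lam * Bop γ μ ν) = af γ (lam - ν) • (Bop γ μ ν * Bop γ μ lam) := by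
  simpa [Fintype.sum_prod_type, Rmat] using Tmat_rtt_apply γ μ lam ν (0, 0) (1, 1)

theorem continuous_Tmat_s7 : Continuous (Tmat γ μ) := by
  unfold Tmat
  simp only [List.ofFn_eq_map]
  refine continuous_list_prod _ fun i _ => continuous_pi fun p => continuous_pi fun q => ?_
  simp only [Rai, Rmat, af, bf, cf]
  split_ifs <;> fun_prop

-- The RTT relation only gives `a(λ-ν) [C(λ), C(ν)] = 0`; continuity in `λ` removes `a(λ-ν)`.
theorem Cop_commute (lam ν : ℂ) : Commute (Cop γ μ lam) (Cop γ μ ν) := by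
  have hC : Continuous (Cop γ μ) := by
    unfold Cop
    have := continuous_Tmat_s7 γ μ
    fun_prop
  refine congrFun (eq_of_forall_sinh_add_smul_eq (hC.mul continuous_const)
    (continuous_const.mul hC) (γ - ν) fun x => ?_) lam
  rw [show x + (γ - ν) = x - ν + γ by ring]
  exact Cop_mul_Cop_rtt γ μ x ν

theorem Bop_commute (lam ν : ℂ) : Commute (Bop γ μ lam) (Bop γ μ ν) := by
  have hB : Continuous (Bop γ μ) := by
    unfold Bop
    have := continuous_Tmat_s7 γ μ
    fun_prop
  refine congrFun (eq_of_forall_sinh_add_smul_eq (hB.mul continuous_const)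
    (continuous_const.mul hB) (γ - ν) fun x => ?_) lam
  rw [show x + (γ - ν) = x - ν + γ by ring]
  exact Bop_mul_Bop_rtt γ μ x ν

theorem Dop_mul_Bop {lam ν : ℂ} (h : bf (lam - ν) ≠ 0) :
    Dop γ μ lam * Bop γ μ ν = (af γ (lam - ν) / bf (lam - ν)) • (Bop γ μ ν * Dop γ μ lam)
      - (cf γ (lam - ν) / bf (lam - ν)) • (Bop γ μ lam * Dop γ μ ν) :=
  eq_div_smul_sub_div_smul h (eq_sub_of_add_eq' (Dop_mul_Bop_rtt γ μ lam ν))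

theorem Cop_mul_Dop {lam ν : ℂ} (h : bf (lam - ν) ≠ 0) :
    Cop γ μ ν * Dop γ μ lam = (af γ (lam - ν) / bf (lam - ν)) • (Dop γ μ lam * Cop γ μ ν)
      - (cf γ (lam - ν) / bf (lam - ν)) • (Dop γ μ ν * Cop γ μ lam) :=
  eq_div_smul_sub_div_smul h (eq_sub_of_add_eq' (Dop_mul_Cop_rtt γ μ lam ν).symm)

theorem Dop_mul_Bprod {n : ℕ} (lam0 : ℂ) (lamB : Fin n → ℂ)
    (hB0 : ∀ i, bf (lam0 - lamB i) ≠ 0) (hBB : ∀ i j, j ≠ i → bf (lamB i - lamB j) ≠ 0) :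
    Dop γ μ lam0 * Bprod γ μ lamB =
      (∏ i, af γ (lam0 - lamB i) / bf (lam0 - lamB i)) • (Bprod γ μ lamB * Dop γ μ lam0)
        - ∑ i, ((cf γ (lam0 - lamB i) / bf (lam0 - lamB i)) *
              ∏ j ∈ Finset.univ.erase i, af γ (lamB i - lamB j) / bf (lamB i - lamB j)) •
            ((Bop γ μ lam0 :: (List.ofFn fun j => Bop γ μ (lamB j)).eraseIdx i).prod *
              Dop γ μ (lamB i)) :=
  mul_list_prod_of_exchange γ (Bop_commute γ μ) (fun _ _ h => Dop_mul_Bop γ μ h) lam0 lamB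
    hB0 hBB

-- `C(ν) D(λ)` obeys the relation of `D(λ) B(ν)` read in the opposite ring.
theorem CprodRev_mul_Dop {n : ℕ} (lam0 : ℂ) (lamC : Fin n → ℂ)
    (hC0 : ∀ i, bf (lam0 - lamC i) ≠ 0) (hCC : ∀ i j, j ≠ i → bf (lamC i - lamC j) ≠ 0) :
    CprodRev γ μ lamC * Dop γ μ lam0 =
      (∏ i, af γ (lam0 - lamC i) / bf (lam0 - lamC i)) • (Dop γ μ lam0 * CprodRev γ μ lamC)
        - ∑ i, ((cf γ (lam0 - lamC i) / bf (lam0 - lamC i)) *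
              ∏ j ∈ Finset.univ.erase i, af γ (lamC i - lamC j) / bf (lamC i - lamC j)) •
            (Dop γ μ (lamC i) * ((Cop γ μ lam0 ::
              (List.ofFn fun j => Cop γ μ (lamC j)).eraseIdx i).reverse).prod) := by
  have h := mul_list_prod_of_exchange (A := (Matrix (Fin L → Fin 2) (Fin L → Fin 2) ℂ)ᵐᵒᵖ) γ
    (B := fun x => MulOpposite.op (Cop γ μ x)) (D := fun x => MulOpposite.op (Dop γ μ x))
    (fun x y => (Cop_commute γ μ x y).op)
    (fun _ _ h => by
      simp only [← MulOpposite.op_mul, Cop_mul_Dop γ μ h, MulOpposite.op_sub,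
        MulOpposite.op_smul])
    lam0 lamC hC0 hCC
  apply_fun MulOpposite.unop at h
  simpa [CprodRev, MulOpposite.unop_list_prod, List.map_ofFn, ← List.eraseIdx_map,
    Function.comp_def] using h

end Exchange

theorem degree_2n1_relation_D_general (γ : ℂ) (L : ℕ) (μ : Fin L → ℂ)
    (n : ℕ) (lam0 : ℂ) (lamB lamC : Fin n → ℂ)
    (hC0 : ∀ i, bf (lam0 - lamC i) ≠ 0)
    (hB0 : ∀ i, bf (lam0 - lamB i) ≠ 0)
    (hCC : ∀ i j, j ≠ i → bf (lamC i - lamC j) ≠ 0)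
    (hBB : ∀ i j, j ≠ i → bf (lamB i - lamB j) ≠ 0) :
    (∏ i, af γ (lam0 - lamC i) / bf (lam0 - lamC i)) •
        (Dop γ μ lam0 * CprodRev γ μ lamC * Bprod γ μ lamB)
      - ∑ i, ((cf γ (lam0 - lamC i) / bf (lam0 - lamC i)) *
            ∏ j ∈ Finset.univ.erase i, af γ (lamC i - lamC j) / bf (lamC i - lamC j)) •
          (Dop γ μ (lamC i) *
            ((Cop γ μ lam0 :: (List.ofFn fun j : Fin n => Cop γ μ (lamC j)).eraseIdx
                (i : ℕ)).reverse).prod *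
            Bprod γ μ lamB)
    = (∏ i, af γ (lam0 - lamB i) / bf (lam0 - lamB i)) •
        (CprodRev γ μ lamC * Bprod γ μ lamB * Dop γ μ lam0)
      - ∑ i, ((cf γ (lam0 - lamB i) / bf (lam0 - lamB i)) *
            ∏ j ∈ Finset.univ.erase i, af γ (lamB i - lamB j) / bf (lamB i - lamB j)) •
          (CprodRev γ μ lamC *
            (Bop γ μ lam0 :: (List.ofFn fun j : Fin n => Bop γ μ (lamB j)).eraseIdx
                (i : ℕ)).prod *
            Dop γ μ (lamB i)) := by
  calc _ = CprodRev γ μ lamC * Dop γ μ lam0 * Bprod γ μ lamB := by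
        rw [CprodRev_mul_Dop γ μ lam0 lamC hC0 hCC, sub_mul, Finset.sum_mul]
        simp only [smul_mul_assoc]
    _ = CprodRev γ μ lamC * (Dop γ μ lam0 * Bprod γ μ lamB) := mul_assoc _ _ _
    _ = _ := by
        rw [Dop_mul_Bprod γ μ lam0 lamB hB0 hBB, mul_sub, Finset.mul_sum]
        simp only [mul_smul_comm, mul_assoc]

/-- Degree `2n+1` Yang–Baxter relation obtained by commuting `D(λ₀)` through
the strings of `C`'s and `B`'s. -/
theorem degree_2n1_relation_D (γ : ℂ) (L : ℕ) (hL : 1 ≤ L) (μ : Fin L → ℂ)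
    (n : ℕ) (hn : 1 ≤ n) (lam0 : ℂ) (lamB lamC : Fin n → ℂ)
    (hC0 : ∀ i, bf (lam0 - lamC i) ≠ 0)
    (hB0 : ∀ i, bf (lam0 - lamB i) ≠ 0)
    (hCC : ∀ i j, j ≠ i → bf (lamC i - lamC j) ≠ 0)
    (hBB : ∀ i j, j ≠ i → bf (lamB i - lamB j) ≠ 0) :
    (∏ i, af γ (lam0 - lamC i) / bf (lam0 - lamC i)) •
        (Dop γ μ lam0 * CprodRev γ μ lamC * Bprod γ μ lamB)
      - ∑ i, ((cf γ (lam0 - lamC i) / bf (lam0 - lamC i)) *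
            ∏ j ∈ Finset.univ.erase i, af γ (lamC i - lamC j) / bf (lamC i - lamC j)) •
          (Dop γ μ (lamC i) *
            ((Cop γ μ lam0 :: (List.ofFn fun j : Fin n => Cop γ μ (lamC j)).eraseIdx
                (i : ℕ)).reverse).prod *
            Bprod γ μ lamB)
    = (∏ i, af γ (lam0 - lamB i) / bf (lam0 - lamB i)) •
        (CprodRev γ μ lamC * Bprod γ μ lamB * Dop γ μ lam0)
      - ∑ i, ((cf γ (lam0 - lamB i) / bf (lam0 - lamB i)) *
            ∏ j ∈ Finset.univ.erase i, af γ (lamB i - lamB j) / bf (lamB i - lamB j)) •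
          (CprodRev γ μ lamC *
            (Bop γ μ lam0 :: (List.ofFn fun j : Fin n => Bop γ μ (lamB j)).eraseIdx
                (i : ℕ)).prod *
            Dop γ μ (lamB i)) :=
  degree_2n1_relation_D_general γ L μ n lam0 lamB lamC hC0 hB0 hCC hBB
end
end

section
/- Polynomial structure of the domain-wall partition function: there exists a polynomial P ∈ ℂ[x₁,…,x_L], of degree at most L−1 in each variable separately, such that for all λ₁,…,λ_L ∈ ℂ, Z(λ₁,…,λ_L) = (∏_{j=1}^{L} e^{(1−L)λ_j}) · P(e^{2λ₁},…,e^{2λ_L}). -/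
/-!
Conjugating each `R`-matrix `R(λ - μ)` by the auxiliary-space gauge `diag (1, e^{-λ})` and
multiplying it by `e^λ` gives a matrix of polynomials of degree at most one in `e^{2λ}`. The gauge
telescopes in the monodromy product, so `B(λ) = e^{(1-L)λ} B̃(e^{2λ})` for a fixed matrix `B̃` of
polynomials. With the weights `w e₁ = 1`, `w e₂ = 0` on the auxiliary space, the entry `(s, t)` of a
product of `k` gauged `R`-matrices has degree at most `k + w t - w s`; hence the entries of `B̃` have
degree at most `L - 1`. Finally `Z` is an entry of `∏ⱼ B̃(e^{2λⱼ})`, and putting the variable `xⱼ` in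
the `j`-th factor gives the polynomial `P`, in which `xⱼ` occurs through one factor only.
-/

noncomputable section

/-- The domain-wall-boundary partition function of the six-vertex model,
`Z(λ₁,…,λ_L) = ⟨0̄| B(λ₁) B(λ₂) ⋯ B(λ_L) |0⟩`. -/
def Zfun (γ : ℂ) {L : ℕ} (μ : Fin L → ℂ) (lam : Fin L → ℂ) : ℂ :=
  dotProduct
    (Matrix.vecMul v0bar ((List.ofFn fun i : Fin L => Bop γ μ (lam i)).prod))
    v0

open Polynomial Matrix

section WeightedDegree

variable {R ι : Type*} [Semiring R]

-- `deg (M i j) ≤ d + w j - w i`, stated without truncated subtraction.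
def WeightedDegreeLE (w : ι → ℕ) (d : ℕ) (M : Matrix ι ι R[X]) : Prop :=
  ∀ i j n, d + w j < n + w i → (M i j).coeff n = 0

theorem weightedDegreeLE_one [DecidableEq ι] (w : ι → ℕ) :
    WeightedDegreeLE w 0 (1 : Matrix ι ι R[X]) := by
  intro i j n h
  rw [one_apply]
  split_ifs with hij
  · subst hij
    rw [coeff_one, if_neg (by omega)]
  · exact coeff_zero n

theorem WeightedDegreeLE.mul [Fintype ι] {w : ι → ℕ} {a b : ℕ} {M N : Matrix ι ι R[X]}
    (hM : WeightedDegreeLE w a M) (hN : WeightedDegreeLE w b N) :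
    WeightedDegreeLE w (a + b) (M * N) := by
  intro i j n h
  rw [mul_apply, finsetSum_coeff]
  refine Finset.sum_eq_zero fun r _ => ?_
  rw [coeff_mul]
  refine Finset.sum_eq_zero fun e he => ?_
  rw [Finset.HasAntidiagonal.mem_antidiagonal] at he
  by_cases h₁ : a + w r < e.1 + w i
  · rw [hM i r e.1 h₁, zero_mul]
  · rw [hN r j e.2 (by omega), mul_zero]

theorem WeightedDegreeLE.prod_ofFn [Fintype ι] [DecidableEq ι] {w : ι → ℕ} {d : ℕ} :
    ∀ {n : ℕ} {M : Fin n → Matrix ι ι R[X]}, (∀ k, WeightedDegreeLE w d (M k)) →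
      WeightedDegreeLE w (n * d) (List.ofFn M).prod
  | 0, _, _ => by simpa using weightedDegreeLE_one w
  | n + 1, M, h => by
    rw [List.ofFn_succ, List.prod_cons, add_mul, one_mul, add_comm]
    exact (h 0).mul (prod_ofFn fun k => h k.succ)

end WeightedDegree

theorem prod_ofFn_mul_of_intertwines {R A : Type*} [CommSemiring R] [Semiring A] [Algebra R A] :
    ∀ {n : ℕ} (a b : Fin n → A) (c : Fin n → R) (g : A), (∀ k, a k * g = c k • (g * b k)) →
      (List.ofFn a).prod * g = (∏ k, c k) • (g * (List.ofFn b).prod)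
  | 0, _, _, _, g, _ => by simp
  | n + 1, a, b, c, g, h => by
    simp only [List.ofFn_succ, List.prod_cons, Fin.prod_univ_succ]
    rw [mul_assoc, prod_ofFn_mul_of_intertwines _ _ _ g fun k => h k.succ, mul_smul_comm,
      ← mul_assoc, h 0, smul_mul_assoc, mul_assoc, smul_smul, mul_comm]

theorem prod_ofFn_smul {R A : Type*} [CommSemiring R] [Semiring A] [Algebra R A] {n : ℕ}
    (a : Fin n → A) (c : Fin n → R) :
    (List.ofFn fun k => c k • a k).prod = (∏ k, c k) • (List.ofFn a).prod := by
  simpa using prod_ofFn_mul_of_intertwines (fun k => c k • a k) a c 1 (by simp)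

theorem prod_ofFn_matrix_map {ι R S : Type*} [Fintype ι] [DecidableEq ι] [Semiring R] [Semiring S]
    {n : ℕ} (f : R →+* S) (M : Fin n → Matrix ι ι R) :
    (List.ofFn fun k => (M k).map f).prod = (List.ofFn M).prod.map f := by
  rw [← RingHom.mapMatrix_apply, map_list_prod, List.map_ofFn]
  rfl

def siteEmbed {R : Type*} [MulZeroOneClass R] {L : ℕ} (i : Fin L)
    (M : Matrix (Fin 2 × Fin 2) (Fin 2 × Fin 2) R) :
    Matrix (Fin 2 × (Fin L → Fin 2)) (Fin 2 × (Fin L → Fin 2)) R :=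
  fun p q => M (p.1, p.2 i) (q.1, q.2 i) * (if ∀ k, k ≠ i → p.2 k = q.2 k then 1 else 0)

theorem Rai_eq_siteEmbed (γ lam : ℂ) {L : ℕ} (i : Fin L) : Rai γ lam i = siteEmbed i (Rmat γ lam) :=
  rfl

theorem siteEmbed_map {R S : Type*} [Semiring R] [Semiring S] {L : ℕ} (i : Fin L) (f : R →+* S)
    (M : Matrix (Fin 2 × Fin 2) (Fin 2 × Fin 2) R) :
    (siteEmbed i M).map f = siteEmbed i (M.map f) := by
  ext p q
  simp [siteEmbed, apply_ite f]

theorem WeightedDegreeLE.siteEmbed {R : Type*} [Semiring R] {L : ℕ} (i : Fin L) {w : Fin 2 → ℕ}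
    {d : ℕ} {M : Matrix (Fin 2 × Fin 2) (Fin 2 × Fin 2) R[X]}
    (hM : WeightedDegreeLE (w ∘ Prod.fst) d M) :
    WeightedDegreeLE (w ∘ Prod.fst) d (siteEmbed i M) := by
  intro p q n h
  simp only [_root_.siteEmbed]
  split_ifs
  · rw [mul_one]
    exact hM _ _ n h
  · rw [mul_zero, coeff_zero]

def auxGauge {α : Type*} [DecidableEq α] (z : ℂ) : Matrix (Fin 2 × α) (Fin 2 × α) ℂ :=
  diagonal fun q => Complex.exp (-z) ^ (q.1 : ℕ)

theorem siteEmbed_mul_auxGauge {L : ℕ} (i : Fin L) (z c : ℂ)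
    {M N : Matrix (Fin 2 × Fin 2) (Fin 2 × Fin 2) ℂ} (h : M * auxGauge z = c • (auxGauge z * N)) :
    siteEmbed i M * auxGauge z = c • (auxGauge z * siteEmbed i N) := by
  ext p q
  have hpq := congrFun (congrFun h (p.1, p.2 i)) (q.1, q.2 i)
  simp only [auxGauge, mul_diagonal, diagonal_mul, Matrix.smul_apply, smul_eq_mul, siteEmbed]
    at hpq ⊢
  split_ifs
  · linear_combination hpq
  · simp

def gaugedRPoly (γ m : ℂ) : Matrix (Fin 2 × Fin 2) (Fin 2 × Fin 2) ℂ[X] :=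
  fun p q =>
    if p = q then
      (if p.1 = p.2 then C (Complex.exp (γ - m) / 2) * X - C (Complex.exp (m - γ) / 2)
        else C (Complex.exp (-m) / 2) * X - C (Complex.exp m / 2))
    else if p.1 = q.2 ∧ p.2 = q.1 then C (Complex.sinh γ) * X ^ (p.1 : ℕ) else 0

theorem Rmat_mul_auxGauge (γ m z : ℂ) :
    Rmat γ (z - m) * auxGauge z =
      Complex.exp (-z) • (auxGauge z * (gaugedRPoly γ m).map (eval (Complex.exp (2 * z)))) := by
  have h2z : Complex.exp (2 * z) = Complex.exp z * Complex.exp z := by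
    rw [two_mul, Complex.exp_add]
  have hz : Complex.exp z ≠ 0 := Complex.exp_ne_zero z
  ext ⟨s, x⟩ ⟨t, y⟩
  simp only [auxGauge, mul_diagonal, diagonal_mul, Matrix.smul_apply, smul_eq_mul, map_apply]
  fin_cases s <;> fin_cases t <;> fin_cases x <;> fin_cases y <;>
    simp [Rmat, gaugedRPoly, af, bf, cf, Complex.sinh, Complex.exp_sub, Complex.exp_add,
      Complex.exp_neg, h2z] <;>
    field_simp

theorem gaugedRPoly_weightedDegreeLE (γ m : ℂ) :
    WeightedDegreeLE (![1, 0] ∘ Prod.fst) 1 (gaugedRPoly γ m) := by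
  rintro ⟨s, x⟩ ⟨t, y⟩ n h
  fin_cases s <;> fin_cases t <;> fin_cases x <;> fin_cases y <;>
    simp [gaugedRPoly, coeff_X, coeff_C] at h ⊢ <;> grind

def gaugedTPoly (γ : ℂ) {L : ℕ} (μ : Fin L → ℂ) :
    Matrix (Fin 2 × (Fin L → Fin 2)) (Fin 2 × (Fin L → Fin 2)) ℂ[X] :=
  (List.ofFn fun i => siteEmbed i (gaugedRPoly γ (μ i))).prod

theorem Tmat_mul_auxGauge (γ : ℂ) {L : ℕ} (μ : Fin L → ℂ) (z : ℂ) :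
    Tmat γ μ z * auxGauge z =
      Complex.exp (-z) ^ L • (auxGauge z * (gaugedTPoly γ μ).map (eval (Complex.exp (2 * z)))) := by
  rw [Tmat, gaugedTPoly, ← coe_evalRingHom, ← prod_ofFn_matrix_map, ← Fin.prod_const]
  refine prod_ofFn_mul_of_intertwines _ _ _ _ fun i => ?_
  rw [Rai_eq_siteEmbed, siteEmbed_map]
  exact siteEmbed_mul_auxGauge i z _ (Rmat_mul_auxGauge γ (μ i) z)

def Bpoly (γ : ℂ) {L : ℕ} (μ : Fin L → ℂ) : Matrix (Fin L → Fin 2) (Fin L → Fin 2) ℂ[X] :=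
  fun p q => gaugedTPoly γ μ (0, p) (1, q)

theorem Bop_eq_eval_Bpoly (γ : ℂ) {L : ℕ} (μ : Fin L → ℂ) (z : ℂ) (p q : Fin L → Fin 2) :
    Bop γ μ z p q = Complex.exp ((1 - L) * z) * (Bpoly γ μ p q).eval (Complex.exp (2 * z)) := by
  have h := congrFun (congrFun (Tmat_mul_auxGauge γ μ z) (0, p)) (1, q)
  simp only [auxGauge, mul_diagonal, diagonal_mul, Matrix.smul_apply, smul_eq_mul, map_apply,
    Fin.val_zero, Fin.val_one, pow_zero, pow_one, one_mul] at h
  have hexp : Complex.exp ((1 - L) * z) = Complex.exp z * Complex.exp (-z) ^ L := by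
    rw [← Complex.exp_nat_mul, ← Complex.exp_add]
    ring_nf
  have hinv : Complex.exp z * Complex.exp (-z) = 1 := by
    rw [← Complex.exp_add, add_neg_cancel, Complex.exp_zero]
  rw [Bop, Bpoly, hexp]
  linear_combination Complex.exp z * h - Tmat γ μ z (0, p) (1, q) * hinv

theorem natDegree_Bpoly_le (γ : ℂ) {L : ℕ} (μ : Fin L → ℂ) (p q : Fin L → Fin 2) :
    (Bpoly γ μ p q).natDegree ≤ L - 1 := by
  have h := WeightedDegreeLE.prod_ofFn (d := 1) fun i : Fin L =>
    (gaugedRPoly_weightedDegreeLE γ (μ i)).siteEmbed i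
  rw [natDegree_le_iff_coeff_eq_zero]
  intro n hn
  exact h (0, p) (1, q) n (show L * 1 + 0 < n + 1 by omega)

section DegreeOf

open MvPolynomial

variable {R σ : Type*} [CommSemiring R]

theorem degreeOf_toMvPolynomial_le [DecidableEq σ] (p : R[X]) (i j : σ) :
    (p.toMvPolynomial j).degreeOf i ≤ if i = j then p.natDegree else 0 := by
  rw [Polynomial.toMvPolynomial, aeval_eq_sum_range]
  refine (degreeOf_sum_le _ _ _).trans
    (Finset.sup_le fun k hk => degreeOf_le_iff.mpr fun m hm => ?_)
  rw [← MvPolynomial.C_mul', MvPolynomial.C_mul_X_pow_eq_monomial] at hm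
  obtain rfl := Finset.mem_singleton.mp (support_monomial_subset hm)
  rw [Finset.mem_range_succ_iff] at hk
  split_ifs with hij <;> simp [hij, hk]

theorem degreeOf_prod_ofFn_apply_le {ι : Type*} [Fintype ι] [DecidableEq ι] (i : σ) :
    ∀ {n : ℕ} (M : Fin n → Matrix ι ι (MvPolynomial σ R)) (d : Fin n → ℕ),
      (∀ k a b, (M k a b).degreeOf i ≤ d k) →
      ∀ a b, ((List.ofFn M).prod a b).degreeOf i ≤ ∑ k, d k
  | 0, _, _, _, a, b => by
    rw [List.ofFn_zero, List.prod_nil, one_apply]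
    split_ifs
    · rw [← MvPolynomial.C_1, degreeOf_C]
      exact Nat.zero_le _
    · rw [degreeOf_zero]
      exact Nat.zero_le _
  | n + 1, M, d, h, a, b => by
    rw [List.ofFn_succ, List.prod_cons, mul_apply, Fin.sum_univ_succ]
    refine (degreeOf_sum_le _ _ _).trans (Finset.sup_le fun c _ => ?_)
    exact (degreeOf_mul_le _ _ _).trans (add_le_add (h 0 a c)
      (degreeOf_prod_ofFn_apply_le i (fun k => M k.succ) (fun k => d k.succ)
        (fun k => h k.succ) c b))

end DegreeOf

theorem Zfun_eq_prod_apply (γ : ℂ) {L : ℕ} (μ lam : Fin L → ℂ) :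
    Zfun γ μ lam = (List.ofFn fun i => Bop γ μ (lam i)).prod (fun _ => 1) (fun _ => 0) := by
  have hv0 : (v0 : (Fin L → Fin 2) → ℂ) = Pi.single (fun _ => 0) 1 := by
    ext p
    simp [v0, Pi.single_apply]
  have hv0bar : (v0bar : (Fin L → Fin 2) → ℂ) = Pi.single (fun _ => 1) 1 := by
    ext p
    simp [v0bar, Pi.single_apply]
  simp [Zfun, hv0, hv0bar]

theorem Z_polynomial_structure_general (γ : ℂ) (L : ℕ) (μ : Fin L → ℂ) :
    ∃ P : MvPolynomial (Fin L) ℂ,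
      (∀ i, P.degreeOf i ≤ L - 1) ∧
      ∀ lam : Fin L → ℂ,
        Zfun γ μ lam =
          (∏ j, Complex.exp ((1 - (L : ℂ)) * lam j)) *
            MvPolynomial.eval (fun i => Complex.exp (2 * lam i)) P := by
  set M : Fin L → Matrix (Fin L → Fin 2) (Fin L → Fin 2) (MvPolynomial (Fin L) ℂ) :=
    fun j => (Bpoly γ μ).map (Polynomial.toMvPolynomial j)
  refine ⟨(List.ofFn M).prod (fun _ => 1) (fun _ => 0), fun i => ?_, fun lam => ?_⟩
  · refine (degreeOf_prod_ofFn_apply_le i M (fun j => if i = j then L - 1 else 0) (fun j p q =>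
      (degreeOf_toMvPolynomial_le _ i j).trans ?_) _ _).trans (by simp)
    split_ifs
    exacts [natDegree_Bpoly_le γ μ p q, le_rfl]
  · have hB : ∀ j, Bop γ μ (lam j) = Complex.exp ((1 - L) * lam j) •
        (M j).map (MvPolynomial.eval fun i => Complex.exp (2 * lam i)) := by
      intro j
      ext p q
      simp [M, Bop_eq_eval_Bpoly]
    simp only [Zfun_eq_prod_apply, hB, prod_ofFn_smul, prod_ofFn_matrix_map]
    rfl

/-- Polynomial structure of the domain-wall partition function: `Z` equals
`(∏_j e^{(1−L)λ_j})` times a polynomial of degree at most `L−1` in each of the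
variables `e^{2λ_j}`. -/
theorem Z_polynomial_structure (γ : ℂ) (L : ℕ) (hL : 1 ≤ L) (μ : Fin L → ℂ) :
    ∃ P : MvPolynomial (Fin L) ℂ,
      (∀ i, P.degreeOf i ≤ L - 1) ∧
      ∀ lam : Fin L → ℂ,
        Zfun γ μ lam =
          (∏ j, Complex.exp ((1 - (L : ℂ)) * lam j)) *
            MvPolynomial.eval (fun i => Complex.exp (2 * lam i)) P :=
  Z_polynomial_structure_general γ L μ

end
end
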